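/- Suppose each f_i is convex and θ̃ = (1/T) Σ_{θ^{(τ)} ∈ P} γ_τ θ^{(τ)} where P is the set of Pareto-nondominated iterates among θ^{(1)},...,θ^{(T)}, and the weights γ_τ are formed by giving each iterate unit weight and reallocating the unit weight of every dominated iterate among nondominated iterates that dominate it (so Σ γ_τ = T). Then for any λ, w ∈ Δ_m, L(θ̃, λ; w) ≤ (1/T) Σ_{t=1}^T L(θ^{(t)}, λ; w). -/

import Mathlib

/-!
The dominated iterates hand their unit weight to iterates that dominate them, so the total
weight stays `T` and, since the scalarized loss `x ↦ ∑ i, λ i * (w i * f i x)` has nonnegative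
coefficients, no reallocation increases the weighted loss. The scalarized loss is convex, and
Jensen's inequality at the center of mass `θ̃` of the reallocated weights finishes the proof.
-/

open Finset

theorem ConvexOn.fun_sum {𝕜 E β ι : Type*} [Semiring 𝕜] [PartialOrder 𝕜] [AddCommMonoid E]
    [AddCommMonoid β] [PartialOrder β] [IsOrderedAddMonoid β] [SMul 𝕜 E] [Module 𝕜 β]
    {s : Set E} {t : Finset ι} {f : ι → E → β} (hs : Convex 𝕜 s)
    (hf : ∀ i ∈ t, ConvexOn 𝕜 s (f i)) : ConvexOn 𝕜 s fun x => ∑ i ∈ t, f i x := by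
  classical
  induction t using Finset.induction_on with
  | empty => simpa using convexOn_const (0 : β) hs
  | insert i t hi ih =>
    simp only [sum_insert hi]
    exact (hf i (mem_insert_self i t)).add (ih fun j hj => hf j (mem_insert_of_mem hj))

section Reallocation

variable {ι 𝕜 : Type*} [Fintype ι] {P : Finset ι} {β : ι → ι → 𝕜} {γ : ι → 𝕜}

theorem sum_eq_one_of_support_subset [AddCommMonoid 𝕜] [One 𝕜] {b : ι → 𝕜}
    (hsupp : ∀ τ, b τ ≠ 0 → τ ∈ P) (hsum : ∑ τ, b τ = 1) : ∑ τ ∈ P, b τ = 1 := by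
  rw [← hsum]
  exact sum_subset (subset_univ P) fun τ _ hτ => by_contra fun h => hτ (hsupp τ h)

variable [DecidableEq ι] [CommSemiring 𝕜]

theorem sum_reallocated_weight_eq_card
    (hsupp : ∀ t ∉ P, ∀ τ, β t τ ≠ 0 → τ ∈ P) (hsum : ∀ t ∉ P, ∑ τ, β t τ = 1)
    (hγ : ∀ τ ∈ P, γ τ = 1 + ∑ t ∈ Pᶜ, β t τ) :
    ∑ τ ∈ P, γ τ = Fintype.card ι := by
  have hrow : ∀ t ∈ Pᶜ, ∑ τ ∈ P, β t τ = 1 := fun t ht =>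
    sum_eq_one_of_support_subset (hsupp t (mem_compl.mp ht)) (hsum t (mem_compl.mp ht))
  rw [sum_congr rfl hγ, sum_add_distrib, sum_comm, sum_congr rfl hrow]
  simp only [sum_const, nsmul_eq_mul, mul_one]
  rw [← Nat.cast_add, card_add_card_compl]

theorem sum_reallocated_weight_mul_le [PartialOrder 𝕜] [IsOrderedRing 𝕜] {g : ι → 𝕜}
    (hβ : ∀ t τ, 0 ≤ β t τ) (hsupp : ∀ t ∉ P, ∀ τ, β t τ ≠ 0 → τ ∈ P)
    (hsum : ∀ t ∉ P, ∑ τ, β t τ = 1) (hγ : ∀ τ ∈ P, γ τ = 1 + ∑ t ∈ Pᶜ, β t τ)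
    (hg : ∀ t ∉ P, ∀ τ, β t τ ≠ 0 → g τ ≤ g t) :
    ∑ τ ∈ P, γ τ * g τ ≤ ∑ t, g t := by
  have hrow : ∀ t ∈ Pᶜ, ∑ τ ∈ P, β t τ = 1 := fun t ht =>
    sum_eq_one_of_support_subset (hsupp t (mem_compl.mp ht)) (hsum t (mem_compl.mp ht))
  have hmove : ∀ t ∈ Pᶜ, ∀ τ ∈ P, β t τ * g τ ≤ β t τ * g t := fun t ht τ _ => by
    by_cases h : β t τ = 0
    · simp [h]
    · exact mul_le_mul_of_nonneg_left (hg t (mem_compl.mp ht) τ h) (hβ t τ)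
  calc ∑ τ ∈ P, γ τ * g τ = ∑ τ ∈ P, g τ + ∑ t ∈ Pᶜ, ∑ τ ∈ P, β t τ * g τ := by
        rw [sum_congr rfl fun τ hτ => by rw [hγ τ hτ, add_mul, one_mul, sum_mul],
          sum_add_distrib, sum_comm]
    _ ≤ ∑ τ ∈ P, g τ + ∑ t ∈ Pᶜ, ∑ τ ∈ P, β t τ * g t :=
        add_le_add le_rfl (sum_le_sum fun t ht => sum_le_sum (hmove t ht))
    _ = ∑ τ ∈ P, g τ + ∑ t ∈ Pᶜ, g t := by
        congr 1
        exact sum_congr rfl fun t ht => by rw [← sum_mul, hrow t ht, one_mul]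
    _ = ∑ t, g t := sum_add_sum_compl P g

end Reallocation

theorem adaptive_conversion_bound_general (d m T : ℕ) (hT : 0 < T)
    (f : Fin m → (Fin d → ℝ) → ℝ)
    (hconv : ∀ i, ConvexOn ℝ Set.univ (f i))
    (θ : Fin T → (Fin d → ℝ))
    (P : Finset (Fin T))
    (β : Fin T → Fin T → ℝ)
    (hβnonneg : ∀ t τ, 0 ≤ β t τ)
    (hβsupp : ∀ t ∉ P, ∀ τ, β t τ ≠ 0 → τ ∈ P ∧ ∀ i, f i (θ τ) ≤ f i (θ t))
    (hβsum : ∀ t ∉ P, ∑ τ, β t τ = 1)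
    (γ : Fin T → ℝ)
    (hγ : ∀ τ ∈ P, γ τ = 1 + ∑ t ∈ Pᶜ, β t τ)
    (lam w : Fin m → ℝ)
    (hlam : lam ∈ stdSimplex ℝ (Fin m)) (hw : w ∈ stdSimplex ℝ (Fin m)) :
    ∑ i, lam i * (w i * f i ((T : ℝ)⁻¹ • ∑ τ ∈ P, γ τ • θ τ))
      ≤ (T : ℝ)⁻¹ * ∑ t, ∑ i, lam i * (w i * f i (θ t)) := by
  set L : (Fin d → ℝ) → ℝ := fun x => ∑ i, lam i * (w i * f i x)
  have hL : ConvexOn ℝ Set.univ L := ConvexOn.fun_sum convex_univ fun i _ =>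
    ((hconv i).smul (hw.1 i)).smul (hlam.1 i)
  have hsupp := fun t ht τ h => (hβsupp t ht τ h).1
  have hmass : ∑ τ ∈ P, γ τ = T := by
    simpa using sum_reallocated_weight_eq_card hsupp hβsum hγ
  have hγ0 : ∀ τ ∈ P, 0 ≤ γ τ := fun τ hτ => by
    rw [hγ τ hτ]
    exact add_nonneg zero_le_one (sum_nonneg fun t _ => hβnonneg t τ)
  have hLmono : ∀ t ∉ P, ∀ τ, β t τ ≠ 0 → L (θ τ) ≤ L (θ t) := fun t ht τ h => by
    refine sum_le_sum fun i _ => ?_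
    gcongr
    exacts [hlam.1 i, hw.1 i, (hβsupp t ht τ h).2 i]
  calc L ((T : ℝ)⁻¹ • ∑ τ ∈ P, γ τ • θ τ) = L (P.centerMass γ θ) := by
        rw [centerMass, hmass]
    _ ≤ P.centerMass γ (L ∘ θ) :=
        hL.map_centerMass_le hγ0 (by rw [hmass]; exact_mod_cast hT) fun _ _ => Set.mem_univ _
    _ = (T : ℝ)⁻¹ * ∑ τ ∈ P, γ τ * L (θ τ) := by
        simp only [centerMass, hmass, Function.comp_apply, smul_eq_mul]
    _ ≤ (T : ℝ)⁻¹ * ∑ t, L (θ t) := by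
        gcongr
        simpa using sum_reallocated_weight_mul_le hβnonneg hsupp hβsum hγ hLmono

/-- The adaptive online-to-batch conversion output `θ̃` satisfies
`L(θ̃, λ; w) ≤ (1/T) Σ_t L(θ^{(t)}, λ; w)`. -/
theorem adaptive_conversion_bound (d m T : ℕ) (hT : 0 < T)
    (f : Fin m → (Fin d → ℝ) → ℝ)
    (hconv : ∀ i, ConvexOn ℝ Set.univ (f i))
    (θ : Fin T → (Fin d → ℝ))
    (P : Finset (Fin T))
    (hP : ∀ t, t ∈ P ↔
      ¬ ∃ s, (∀ i, f i (θ s) ≤ f i (θ t)) ∧ ∃ j, f j (θ s) < f j (θ t))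
    (β : Fin T → Fin T → ℝ)
    (hβnonneg : ∀ t τ, 0 ≤ β t τ)
    (hβsupp : ∀ t ∉ P, ∀ τ, β t τ ≠ 0 → τ ∈ P ∧ ∀ i, f i (θ τ) ≤ f i (θ t))
    (hβsum : ∀ t ∉ P, ∑ τ, β t τ = 1)
    (γ : Fin T → ℝ)
    (hγ : ∀ τ ∈ P, γ τ = 1 + ∑ t ∈ Pᶜ, β t τ)
    (lam w : Fin m → ℝ)
    (hlam : lam ∈ stdSimplex ℝ (Fin m)) (hw : w ∈ stdSimplex ℝ (Fin m)) :
    ∑ i, lam i * (w i * f i ((T : ℝ)⁻¹ • ∑ τ ∈ P, γ τ • θ τ))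
      ≤ (T : ℝ)⁻¹ * ∑ t, ∑ i, lam i * (w i * f i (θ t)) :=
  adaptive_conversion_bound_general d m T hT f hconv θ P β hβnonneg hβsupp hβsum γ hγ lam w hlam hw
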